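/- arXiv:1111.2127 — 2 statements merged into one kernel-verified Lean document; each statement's English description precedes it below -/
import Mathlib

section
/- Let h : 𝒞 → ℝ and let v₁, v₂ be distinct vertices of V(G) \ {s,t}. Then h(C) = 0 for all cuts C not crossed by the edge v₁ → v₂ (i.e., all cuts where it is not the case that v₁ ∈ L(C) and v₂ ∈ R(C)) if and only if h can be written in the form Σ_{V ⊆ V(G)\{s,t,v₁,v₂}} c_V (e_V − e_{V ∪ {v₁}} + e_{V ∪ {v₂}} − e_{V ∪ {v₁,v₂}}). -/
/-!
Write `σᵥ(C) = ±1` for the sign of `v` in `C`, so that `e_W = ∏_{v ∈ W} σᵥ`. Then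
`e_W - e_{W∪{v₁}} + e_{W∪{v₂}} - e_{W∪{v₁,v₂}} = (1 - σ_{v₁}) (1 + σ_{v₂}) e_W`, which is
`4 e_W` on the cuts crossed by `v₁ → v₂` and `0` elsewhere. This gives one direction. For the
other, a cut crossed by `v₁ → v₂` is determined by its restriction to
`A = V \ {s, t, v₁, v₂}`, and the characters `e_W`, `W ⊆ A`, are orthogonal on such
restrictions, so Fourier inversion on `A` produces the coefficients `c_W`.
-/

/-- An s-t cut: each vertex is assigned to the left side (`true`) or right side (`false`),
with `s` on the left and `t` on the right. -/
abbrev STCut (V : Type*) (s t : V) := {C : V → Bool // C s = true ∧ C t = false}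

/-- The Fourier basis function `e_W(C) = (-1)^{|W ∩ L(C)|}`. -/
def eFun {V : Type*} [DecidableEq V] {s t : V} (W : Finset V) (C : STCut V s t) : ℝ :=
  (-1 : ℝ) ^ (W.filter (fun v => C.1 v = true)).card

open Finset

section

variable {V : Type*} [DecidableEq V] {s t : V}

lemma eFun_eq_prod (W : Finset V) (C : STCut V s t) :
    eFun W C = ∏ v ∈ W, if C.1 v = true then (-1 : ℝ) else 1 := by
  rw [prod_ite, prod_const, prod_const, one_pow, mul_one, eFun]

lemma eFun_insert {v : V} {W : Finset V} (hv : v ∉ W) (C : STCut V s t) :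
    eFun (insert v W) C = (if C.1 v = true then (-1 : ℝ) else 1) * eFun W C := by
  rw [eFun_eq_prod, eFun_eq_prod, prod_insert hv]

lemma eFun_sub_add_sub_apply {v₁ v₂ : V} {W : Finset V} (h₁ : v₁ ∉ W) (h₂ : v₂ ∉ W)
    (hne : v₁ ≠ v₂) (C : STCut V s t) :
    eFun W C - eFun (insert v₁ W) C + eFun (insert v₂ W) C
        - eFun (insert v₁ (insert v₂ W)) C
      = if C.1 v₁ = true ∧ C.1 v₂ = false then 4 * eFun W C else 0 := by
  rw [eFun_insert h₁, eFun_insert h₂, eFun_insert (by simp [hne, h₁]), eFun_insert h₂]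
  cases C.1 v₁ <;> cases C.1 v₂ <;> norm_num; ring

lemma sum_powerset_eFun_mul_eFun (A : Finset V) (C C' : STCut V s t) :
    ∑ W ∈ A.powerset, eFun W C * eFun W C'
      = if ∀ v ∈ A, C.1 v = C'.1 v then (2 : ℝ) ^ A.card else 0 := by
  have hsplit : ∀ W ∈ A.powerset, eFun W C * eFun W C' =
      (∏ v ∈ W, (if C.1 v = true then (-1 : ℝ) else 1) * (if C'.1 v = true then -1 else 1))
        * ∏ _v ∈ A \ W, (1 : ℝ) := by
    intro W _
    rw [eFun_eq_prod, eFun_eq_prod, ← prod_mul_distrib, prod_const_one, mul_one]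
  rw [sum_congr rfl hsplit, ← prod_add]
  split_ifs with hagree
  · rw [← prod_const]
    refine prod_congr rfl fun v hv => ?_
    rw [hagree v hv]
    cases C'.1 v <;> norm_num
  · push Not at hagree
    obtain ⟨v, hv, hdiff⟩ := hagree
    refine prod_eq_zero hv ?_
    revert hdiff
    cases C.1 v <;> cases C'.1 v <;> norm_num

lemma sum_powerset_fourier_mul_eFun (A : Finset V) [Fintype (STCut V s t)]
    (h : STCut V s t → ℝ) (C : STCut V s t)
    (hsep : ∀ C', h C' ≠ 0 → (∀ v ∈ A, C'.1 v = C.1 v) → C' = C) :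
    ∑ W ∈ A.powerset, (∑ C', h C' * eFun W C') * eFun W C = 2 ^ A.card * h C := by
  calc ∑ W ∈ A.powerset, (∑ C', h C' * eFun W C') * eFun W C
      = ∑ C', h C' * ∑ W ∈ A.powerset, eFun W C' * eFun W C := by
        simp only [sum_mul, mul_sum, mul_assoc]
        exact sum_comm
    _ = h C * 2 ^ A.card := by
        refine (sum_eq_single C (fun C' _ hC' => ?_) (by simp)).trans ?_
        · by_cases hh : h C' = 0
          · rw [hh, zero_mul]
          · rw [sum_powerset_eFun_mul_eFun, if_neg fun hagree => hC' (hsep C' hh hagree),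
              mul_zero]
        · rw [sum_powerset_eFun_mul_eFun, if_pos fun _ _ => rfl]
    _ = 2 ^ A.card * h C := mul_comm _ _

lemma eq_of_crosses_of_eqOn_sdiff [Fintype V] {v₁ v₂ : V} {C C' : STCut V s t}
    (hC : C.1 v₁ = true ∧ C.1 v₂ = false) (hC' : C'.1 v₁ = true ∧ C'.1 v₂ = false)
    (hagree : ∀ v ∈ univ \ {s, t, v₁, v₂}, C'.1 v = C.1 v) : C' = C := by
  refine Subtype.ext (funext fun v => ?_)
  by_cases hv : v ∈ univ \ {s, t, v₁, v₂}
  · exact hagree v hv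
  · simp only [mem_sdiff, mem_univ, true_and, mem_insert, mem_singleton, not_not] at hv
    rcases hv with rfl | rfl | rfl | rfl
    · rw [C'.2.1, C.2.1]
    · rw [C'.2.2, C.2.2]
    · rw [hC'.1, hC.1]
    · rw [hC'.2, hC.2]

lemma filter_forall_not_mem_eq_powerset [Fintype V] (s t v₁ v₂ : V) :
    univ.filter (fun W : Finset V => s ∉ W ∧ t ∉ W ∧ v₁ ∉ W ∧ v₂ ∉ W)
      = (univ \ {s, t, v₁, v₂}).powerset := by
  ext W
  simp [subset_sdiff, disjoint_insert_right]

lemma sum_smul_eFun_sub_add_sub_apply {v₁ v₂ : V} (hne : v₁ ≠ v₂)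
    (S : Finset (Finset V)) (hS : ∀ W ∈ S, v₁ ∉ W ∧ v₂ ∉ W) (c : Finset V → ℝ)
    (C : STCut V s t) :
    (∑ W ∈ S, c W • ((eFun W : STCut V s t → ℝ) - eFun (insert v₁ W) + eFun (insert v₂ W)
        - eFun (insert v₁ (insert v₂ W))) : STCut V s t → ℝ) C
      = if C.1 v₁ = true ∧ C.1 v₂ = false then 4 * ∑ W ∈ S, c W * eFun W C else 0 := by
  simp only [Finset.sum_apply, Pi.smul_apply, Pi.sub_apply, Pi.add_apply, smul_eq_mul]
  rw [sum_congr rfl fun W hW => by rw [eFun_sub_add_sub_apply (hS W hW).1 (hS W hW).2 hne]]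
  split_ifs
  · rw [mul_sum]
    exact sum_congr rfl fun W _ => by ring
  · simp

end

theorem stmt4_general {V : Type*} [Fintype V] [DecidableEq V] (s t v₁ v₂ : V) (hne : v₁ ≠ v₂)
    (h : STCut V s t → ℝ) :
    (∀ C : STCut V s t, ¬(C.1 v₁ = true ∧ C.1 v₂ = false) → h C = 0) ↔
      ∃ c : Finset V → ℝ,
        h = ∑ W ∈ Finset.univ.filter
              (fun W : Finset V => s ∉ W ∧ t ∉ W ∧ v₁ ∉ W ∧ v₂ ∉ W),
          c W • ((eFun W : STCut V s t → ℝ) - eFun (insert v₁ W) + eFun (insert v₂ W)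
            - eFun (insert v₁ (insert v₂ W))) := by
  have hS : ∀ W ∈ univ.filter (fun W : Finset V => s ∉ W ∧ t ∉ W ∧ v₁ ∉ W ∧ v₂ ∉ W),
      v₁ ∉ W ∧ v₂ ∉ W := fun W hW => by simp_all
  constructor
  · intro hsupp
    refine ⟨fun W => (4 * 2 ^ (univ \ {s, t, v₁, v₂}).card)⁻¹ * ∑ C', h C' * eFun W C',
      funext fun C => ?_⟩
    rw [sum_smul_eFun_sub_add_sub_apply hne _ hS, filter_forall_not_mem_eq_powerset]
    set A : Finset V := univ \ {s, t, v₁, v₂}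
    split_ifs with hC
    · have hsep : ∀ C', h C' ≠ 0 → (∀ v ∈ A, C'.1 v = C.1 v) → C' = C := fun C' hC' =>
        eq_of_crosses_of_eqOn_sdiff hC (not_not.mp (mt (hsupp C') hC'))
      simp only [mul_assoc, ← mul_sum, sum_powerset_fourier_mul_eFun A h C hsep]
      field_simp
    · exact hsupp C hC
  · rintro ⟨c, rfl⟩ C hC
    rw [sum_smul_eFun_sub_add_sub_apply hne _ hS, if_neg hC]

theorem stmt4 {V : Type*} [Fintype V] [DecidableEq V] (s t v₁ v₂ : V) (hst : s ≠ t)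
    (hv₁s : v₁ ≠ s) (hv₁t : v₁ ≠ t) (hv₂s : v₂ ≠ s) (hv₂t : v₂ ≠ t) (hne : v₁ ≠ v₂)
    (h : STCut V s t → ℝ) :
    (∀ C : STCut V s t, ¬(C.1 v₁ = true ∧ C.1 v₂ = false) → h C = 0) ↔
      ∃ c : Finset V → ℝ,
        h = ∑ W ∈ Finset.univ.filter
              (fun W : Finset V => s ∉ W ∧ t ∉ W ∧ v₁ ∉ W ∧ v₂ ∉ W),
          c W • ((eFun W : STCut V s t → ℝ) - eFun (insert v₁ W) + eFun (insert v₂ W)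
            - eFun (insert v₁ (insert v₂ W))) :=
  stmt4_general s t v₁ v₂ hne h
end

section
/- Two knowledge sets K₁ and K₂ have equal transitive closures if and only if K₂ can be obtained from K₁ using only the operations: (2) if v₃ → v₄ and v₄ → v₅ are both in K and v₃ ≠ v₅, add or remove v₃ → v₅; and (3) if s → t is in K, add or remove any edge other than s → t. -/
/-- There is a (nontrivial) directed path from `u` to `w` in the knowledge set `K`. -/
def hasPath {V : Type*} (K : Set (V × V)) (u w : V) : Prop :=
  Relation.TransGen (fun a b => (a, b) ∈ K) u w

/-- The transitive closure of a knowledge set: if `K` has a path from `s` to `t` this is the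
complete directed graph on `V`; otherwise it consists of all pairs `u ≠ w` with a path from
`u` to `w` in `K`. -/
def kClosure {V : Type*} (s t : V) (K : Set (V × V)) : Set (V × V) :=
  {p | p.1 ≠ p.2 ∧ (hasPath K s t ∨ hasPath K p.1 p.2)}

/-- Operation 2: if `a → b` and `b → c` are both in `K` and `a ≠ c`, add or remove `a → c`. -/
def Op2 {V : Type*} (K K' : Set (V × V)) : Prop :=
  ∃ a b c : V, a ≠ c ∧ (a, b) ∈ K ∧ (b, c) ∈ K ∧ (K' = K ∪ {(a, c)} ∨ K' = K \ {(a, c)})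

/-- Operation 3: if `s → t` is in `K`, add or remove any edge other than `s → t`. -/
def Op3 {V : Type*} (s t : V) (K K' : Set (V × V)) : Prop :=
  (s, t) ∈ K ∧ ∃ e : V × V, e ≠ (s, t) ∧ (K' = K ∪ {e} ∨ K' = K \ {e})

/-!
Every move used to go from a knowledge set to a normal form can be undone: a shortcut `u → w` of a
path is added by operation 2 and removed again by it, and with `s → t` present operation 3 adds
and removes arbitrary edges. Without an `s → t` path, shortcutting all paths turns `K` into its
closure; with one, `s → t` is added and operation 3 reaches any other set containing it. So sets
with equal closures are joined through their common normal form.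

Conversely, operation 3 preserves the (complete) closure, and operation 2 preserves the paths,
except when it deletes `a → c` using a witness equal to `a → c`; this needs a loop, so the closure
can only change in a state with a loop and no `s → t` path, which no move can leave again.
-/

section

variable {V : Type*} {s t : V} {K K' M : Set (V × V)}

lemma hasPath_mono (h : K ⊆ K') {u w : V} (hp : hasPath K u w) : hasPath K' u w :=
  Relation.TransGen.mono (fun _ _ hab => h hab) _ _ hp

lemma hasPath_of_forall_mem_hasPath (h : ∀ p ∈ K', hasPath K p.1 p.2) {u w : V}
    (hp : hasPath K' u w) : hasPath K u w :=
  Relation.TransGen.lift' id (fun a b hab => h (a, b) hab) _ _ hp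

lemma hasPath_union_singleton_iff {e : V × V} (he : hasPath K e.1 e.2) {u w : V} :
    hasPath (K ∪ {e}) u w ↔ hasPath K u w := by
  refine ⟨hasPath_of_forall_mem_hasPath ?_, hasPath_mono Set.subset_union_left⟩
  rintro p (hp | rfl)
  · exact .single hp
  · exact he

lemma hasPath_diff_singleton_iff {e : V × V} (he : hasPath (K \ {e}) e.1 e.2) {u w : V} :
    hasPath (K \ {e}) u w ↔ hasPath K u w := by
  refine ⟨hasPath_mono Set.sdiff_subset, hasPath_of_forall_mem_hasPath ?_⟩
  intro p hp
  by_cases hpe : p = e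
  · exact hpe ▸ he
  · exact .single ⟨hp, hpe⟩

lemma kClosure_congr (h : ∀ u w : V, hasPath K u w ↔ hasPath K' u w) :
    kClosure s t K = kClosure s t K' := by
  ext p
  simp only [kClosure, h]

lemma kClosure_of_hasPath (h : hasPath K s t) :
    kClosure s t K = {p : V × V | p.1 ≠ p.2} := by
  ext p
  simp [kClosure, h]

lemma kClosure_eq_of_hasPath (h : hasPath K s t) (h' : hasPath K' s t) :
    kClosure s t K = kClosure s t K' :=
  (kClosure_of_hasPath h).trans (kClosure_of_hasPath h').symm

lemma mk_mem_kClosure_iff (hst : s ≠ t) : (s, t) ∈ kClosure s t K ↔ hasPath K s t := by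
  simp [kClosure, hst]

lemma subset_kClosure (hK : ∀ p ∈ K, p.1 ≠ p.2) : K ⊆ kClosure s t K :=
  fun p hp => ⟨hK p hp, Or.inr (.single hp)⟩

def Step (s t : V) (K K' : Set (V × V)) : Prop := Op2 K K' ∨ Op3 s t K K'

def ReversibleStep (s t : V) (K K' : Set (V × V)) : Prop := Step s t K K' ∧ Step s t K' K

instance : Std.Symm (ReversibleStep s t) := ⟨fun _ _ h => h.symm⟩

notation K " ≈[" s ", " t "] " L => Relation.ReflTransGen (ReversibleStep s t) K L

lemma reach_symm {L : Set (V × V)} (h : K ≈[s, t] L) : L ≈[s, t] K :=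
  Std.Symm.symm _ _ h

lemma reach_union_singleton {e : V × V}
    (h : e ∉ K → ReversibleStep s t K (K ∪ {e})) : K ≈[s, t] K ∪ {e} := by
  by_cases he : e ∈ K
  · rw [Set.union_eq_self_of_subset_right (Set.singleton_subset_iff.2 he)]
  · exact .single (h he)

lemma union_singleton_diff_singleton {e : V × V} (he : e ∉ K) : (K ∪ {e}) \ {e} = K := by
  rw [Set.union_singleton, Set.insert_sdiff_self_of_notMem he]

lemma reach_union_singleton_of_op2 {a b c : V} (hac : a ≠ c) (hab : (a, b) ∈ K)
    (hbc : (b, c) ∈ K) : K ≈[s, t] K ∪ {(a, c)} :=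
  reach_union_singleton fun he =>
    ⟨.inl ⟨a, b, c, hac, hab, hbc, .inl rfl⟩,
      .inl ⟨a, b, c, hac, .inl hab, .inl hbc, .inr (union_singleton_diff_singleton he).symm⟩⟩

lemma reach_union_singleton_of_op3 (hst : (s, t) ∈ K) (e : V × V) : K ≈[s, t] K ∪ {e} := by
  by_cases he : e = (s, t)
  · rw [he, Set.union_eq_self_of_subset_right (Set.singleton_subset_iff.2 hst)]
  · exact reach_union_singleton fun he' =>
      ⟨.inr ⟨hst, e, he, .inl rfl⟩,
        .inr ⟨.inl hst, e, he, .inr (union_singleton_diff_singleton he').symm⟩⟩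

/-- A path `u → ⋯ → v → w` is shortcut to `u → w` through the edge `u → v`, which is first
added and at the end removed again, so that every move stays reversible. -/
lemma reach_union_singleton_of_hasPath {u w : V} (h : hasPath K u w) (huw : u ≠ w)
    (hKM : K ⊆ M) : M ≈[s, t] M ∪ {(u, w)} := by
  induction h generalizing M with
  | single huw' => exact reach_union_singleton fun he => absurd (hKM huw') he
  | @tail v w _ hvw ih =>
    by_cases huv : u = v
    · subst huv
      exact reach_union_singleton fun he => absurd (hKM hvw) he
    have hM : M ∪ {(u, v)} ∪ {(u, w)} = M ∪ {(u, w)} ∪ {(u, v)} := by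
      simp only [Set.union_right_comm]
    calc M ≈[s, t] M ∪ {(u, v)} := ih huv hKM
      _ ≈[s, t] M ∪ {(u, v)} ∪ {(u, w)} :=
        reach_union_singleton_of_op2 huw (.inr rfl) (.inl (hKM hvw))
      _ ≈[s, t] M ∪ {(u, w)} := hM ▸ reach_symm (ih huv (hKM.trans Set.subset_union_left))

lemma reach_union_of_forall [Finite V] {S : Set (V × V)}
    (h : ∀ e ∈ S, ∀ M, K ⊆ M → M ≈[s, t] M ∪ {e}) : K ≈[s, t] K ∪ S := by
  induction S, Set.toFinite S using Set.Finite.induction_on with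
  | empty => rw [Set.union_empty]
  | @insert e T _ _ ih =>
    rw [Set.union_insert, ← Set.union_singleton]
    exact (ih fun e' he' => h e' (.inr he')).trans (h e (.inl rfl) _ Set.subset_union_left)

lemma reach_kClosure [Finite V] (hK : ∀ p ∈ K, p.1 ≠ p.2) (hno : ¬ hasPath K s t) :
    K ≈[s, t] kClosure s t K := by
  rw [← Set.union_eq_self_of_subset_left (subset_kClosure hK)]
  exact reach_union_of_forall fun e he M hKM =>
    reach_union_singleton_of_hasPath (he.2.resolve_left hno) he.1 hKM

lemma reach_of_mem [Finite V] (hK : (s, t) ∈ K) (hM : (s, t) ∈ M) : K ≈[s, t] M :=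
  (reach_union_of_forall fun e _ _ hKL => reach_union_singleton_of_op3 (hKL hK) e).trans
    (Set.union_comm K M ▸ reach_symm
      (reach_union_of_forall fun e _ _ hML => reach_union_singleton_of_op3 (hML hM) e))

lemma reach_of_hasPath [Finite V] (hst : s ≠ t) (hK : hasPath K s t) (hM : hasPath M s t) :
    K ≈[s, t] M :=
  calc K ≈[s, t] K ∪ {(s, t)} := reach_union_singleton_of_hasPath hK hst subset_rfl
    _ ≈[s, t] M ∪ {(s, t)} := reach_of_mem (.inr rfl) (.inr rfl)
    _ ≈[s, t] M := reach_symm (reach_union_singleton_of_hasPath hM hst subset_rfl)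

lemma Op2.hasPath_of_hasPath (h : Op2 K K') {u w : V} (hp : hasPath K' u w) :
    hasPath K u w := by
  obtain ⟨a, b, c, -, hab, hbc, rfl | rfl⟩ := h
  · exact (hasPath_union_singleton_iff (.head hab (.single hbc))).1 hp
  · exact hasPath_mono Set.sdiff_subset hp

lemma Op2.loop_mem (h : Op2 K K') {v : V} (hv : (v, v) ∈ K) : (v, v) ∈ K' := by
  obtain ⟨a, b, c, hac, -, -, rfl | rfl⟩ := h
  · exact .inl hv
  · exact ⟨hv, fun hva => hac ((congrArg Prod.fst hva).symm.trans (congrArg Prod.snd hva))⟩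

/-- Removing `a → c` keeps the witnesses `a → b`, `b → c` unless one of them is `a → c` itself,
which forces `b = c` or `a = b`, hence a loop. -/
lemma Op2.hasPath_iff_or_loop (h : Op2 K K') :
    (∀ u w : V, hasPath K' u w ↔ hasPath K u w) ∨ ∃ v, (v, v) ∈ K' := by
  obtain ⟨a, b, c, hac, hab, hbc, rfl | rfl⟩ := h
  · exact .inl fun u w => hasPath_union_singleton_iff (.head hab (.single hbc))
  by_cases hw : (a, b) ≠ (a, c) ∧ (b, c) ≠ (a, c)
  · exact .inl fun u w =>
      hasPath_diff_singleton_iff (.head ⟨hab, hw.1⟩ (.single ⟨hbc, hw.2⟩))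
  refine .inr ?_
  rcases not_and_or.1 hw with hbc' | hab'
  · obtain rfl : b = c := congrArg Prod.snd (not_not.1 hbc')
    exact ⟨b, hbc, fun h => hac (congrArg Prod.fst h).symm⟩
  · obtain rfl : b = a := congrArg Prod.fst (not_not.1 hab')
    exact ⟨b, hab, fun h => hac (congrArg Prod.snd h)⟩

lemma Step.kClosure_eq_or_trapped (h : Step s t K K') :
    kClosure s t K' = kClosure s t K ∨ (∃ v, (v, v) ∈ K') ∧ ¬ hasPath K' s t := by
  rcases h with h | ⟨hst, e, he, rfl | rfl⟩
  · rcases h.hasPath_iff_or_loop with hiff | hloop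
    · exact .inl (kClosure_congr hiff)
    by_cases hp : hasPath K' s t
    · exact .inl (kClosure_eq_of_hasPath hp (h.hasPath_of_hasPath hp))
    · exact .inr ⟨hloop, hp⟩
  · exact .inl (kClosure_eq_of_hasPath (.single (.inl hst)) (.single hst))
  · exact .inl (kClosure_eq_of_hasPath (.single ⟨hst, Ne.symm he⟩) (.single hst))

/-- Without an `s → t` path only operation 2 applies, and it can neither create such a path nor
remove a loop. -/
lemma Step.trapped (h : Step s t K K') (hloop : ∃ v, (v, v) ∈ K) (hno : ¬ hasPath K s t) :
    (∃ v, (v, v) ∈ K') ∧ ¬ hasPath K' s t := by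
  rcases h with h | ⟨hst, -⟩
  · obtain ⟨v, hv⟩ := hloop
    exact ⟨⟨v, h.loop_mem hv⟩, fun hp => hno (h.hasPath_of_hasPath hp)⟩
  · exact absurd (.single hst) hno

lemma kClosure_eq_of_reflTransGen_step (h : Relation.ReflTransGen (Step s t) K K')
    (hK' : ∀ p ∈ K', p.1 ≠ p.2) : kClosure s t K' = kClosure s t K := by
  suffices kClosure s t K' = kClosure s t K ∨ (∃ v, (v, v) ∈ K') ∧ ¬ hasPath K' s t by
    obtain h | ⟨⟨v, hv⟩, -⟩ := this
    · exact h
    · exact absurd rfl (hK' _ hv)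
  clear hK'
  induction h with
  | refl => exact .inl rfl
  | tail _ hstep ih =>
    rcases ih with ih | ⟨hloop, hno⟩
    · exact (hstep.kClosure_eq_or_trapped).imp_left (·.trans ih)
    · exact .inr (hstep.trapped hloop hno)

end

theorem stmt16 {V : Type*} [Fintype V] (s t : V) (hst : s ≠ t)
    (K₁ K₂ : Set (V × V)) (hK₁ : ∀ p ∈ K₁, p.1 ≠ p.2) (hK₂ : ∀ p ∈ K₂, p.1 ≠ p.2) :
    kClosure s t K₁ = kClosure s t K₂ ↔
      Relation.ReflTransGen (fun K K' => Op2 K K' ∨ Op3 s t K K') K₁ K₂ := by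
  refine ⟨fun hC => ?_, fun h => (kClosure_eq_of_reflTransGen_step h hK₂).symm⟩
  have hpath : hasPath K₁ s t ↔ hasPath K₂ s t := by
    rw [← mk_mem_kClosure_iff hst, hC, mk_mem_kClosure_iff hst]
  suffices K₁ ≈[s, t] K₂ from
    Relation.ReflTransGen.mono (fun _ _ h => h.1) _ _ this
  by_cases hp : hasPath K₁ s t
  · exact reach_of_hasPath hst hp (hpath.1 hp)
  · calc K₁ ≈[s, t] kClosure s t K₁ := reach_kClosure hK₁ hp
      _ = kClosure s t K₂ := hC
      _ ≈[s, t] K₂ := reach_symm (reach_kClosure hK₂ (hpath.not.1 hp))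
end
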